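/- arXiv:2205.15654 — 2 statements merged into one kernel-verified Lean document; each statement's English description precedes it below -/
import Mathlib

section
/- Let (Ω, 𝓕, P) be a probability space and H ≥ 1. Let λ_1, …, λ_H, λ'_1, …, λ'_H and X_1, …, X_H, Y_1, …, Y_H be square-integrable real random variables such that the random vector (λ_1, …, λ_H, λ'_1, …, λ'_H) is independent of the random vector (X_1, …, X_H, Y_1, …, Y_H). Assume additionally that: (i) the pairs (X_h, Y_h) are identically distributed across h = 1, …, H; (ii) λ_h and λ'_k are independent whenever h ≠ k; (iii) E[λ_h λ'_h] = κ and Cov(λ_h, λ'_h) = ρ for all h; (iv) all λ_h and λ'_h have a common mean λ̄. Then Cov(Σ_{h=1}^H λ_h X_h, Σ_{k=1}^H λ'_k Y_k) = Cov(X_1, Y_1)·κ·H + E[X_1]·E[Y_1]·ρ·H + λ̄² · Σ_{h ≠ k} Cov(X_h, Y_k). (This is the second display of Proposition 3 of the paper.) -/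
open MeasureTheory ProbabilityTheory

/-- Covariance of two real-valued random variables: `Cov(X, Y) = E[XY] - E[X]·E[Y]`. -/
noncomputable def cov {Ω : Type*} [MeasurableSpace Ω] (P : Measure Ω) (X Y : Ω → ℝ) : ℝ :=
  (∫ ω, X ω * Y ω ∂P) - (∫ ω, X ω ∂P) * (∫ ω, Y ω ∂P)

/-- Proposition 3, second display: under exchangeability-type assumptions on the scores and
the latent masses, the covariance of the two linear combinations simplifies. -/
theorem covariance_sum_latent_factor_exchangeable
    {Ω : Type*} [MeasurableSpace Ω] (P : Measure Ω) [IsProbabilityMeasure P]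
    (H : ℕ) (hH : 1 ≤ H)
    (lam lam' X Y : Fin H → Ω → ℝ)
    (hlam : ∀ h, MemLp (lam h) 2 P) (hlam' : ∀ h, MemLp (lam' h) 2 P)
    (hX : ∀ h, MemLp (X h) 2 P) (hY : ∀ h, MemLp (Y h) 2 P)
    (hindep : IndepFun
      (fun ω => (((fun h => lam h ω), (fun h => lam' h ω)) : (Fin H → ℝ) × (Fin H → ℝ)))
      (fun ω => (((fun h => X h ω), (fun h => Y h ω)) : (Fin H → ℝ) × (Fin H → ℝ))) P)
    -- (i) the pairs (X_h, Y_h) are identically distributed across h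
    (hid : ∀ h, IdentDistrib (fun ω => (X h ω, Y h ω))
      (fun ω => (X ⟨0, hH⟩ ω, Y ⟨0, hH⟩ ω)) P P)
    -- (ii) λ_h and λ'_k are independent whenever h ≠ k
    (hcross : ∀ h k, h ≠ k → IndepFun (lam h) (lam' k) P)
    -- (iii) common mixed moment and covariance of matching scores
    (κ ρ : ℝ)
    (hκ : ∀ h, (∫ ω, lam h ω * lam' h ω ∂P) = κ)
    (hρ : ∀ h, cov P (lam h) (lam' h) = ρ)
    -- (iv) all scores have a common mean λ̄
    (lamBar : ℝ)
    (hmean : ∀ h, (∫ ω, lam h ω ∂P) = lamBar)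
    (hmean' : ∀ h, (∫ ω, lam' h ω ∂P) = lamBar) :
    cov P (fun ω => ∑ h, lam h ω * X h ω) (fun ω => ∑ k, lam' k ω * Y k ω) =
      cov P (X ⟨0, hH⟩) (Y ⟨0, hH⟩) * κ * H
        + (∫ ω, X ⟨0, hH⟩ ω ∂P) * (∫ ω, Y ⟨0, hH⟩ ω ∂P) * ρ * H
        + lamBar ^ 2 *
          ∑ p ∈ Finset.univ.filter (fun p : Fin H × Fin H => p.1 ≠ p.2),
            cov P (X p.1) (Y p.2) := by
  classical
  set x0 : Fin H := ⟨0, hH⟩ with hx0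
  -- product of two L² functions is integrable
  have mulInt : ∀ {f g : Ω → ℝ}, MemLp f 2 P → MemLp g 2 P →
      Integrable (fun ω => f ω * g ω) P := by
    intro f g hf hg
    have := memLp_one_iff_integrable.mp
      (hg.smul hf (p := 2) (q := 2) (r := 1) (hpqr := ⟨by norm_num [ENNReal.inv_two_add_inv_two]⟩))
    simpa [smul_eq_mul, Pi.mul_def, mul_comm] using this
  have measL : ∀ h k : Fin H,
      Measurable (fun p : (Fin H → ℝ) × (Fin H → ℝ) => p.1 h * p.2 k) :=
    fun h k => ((measurable_pi_apply h).comp measurable_fst).mul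
      ((measurable_pi_apply k).comp measurable_snd)
  have indepHK : ∀ h k h' k' : Fin H,
      IndepFun (fun ω => lam h ω * lam' k ω) (fun ω => X h' ω * Y k' ω) P :=
    fun h k h' k' => hindep.comp (measL h k) (measL h' k')
  have indep1 : ∀ h h' : Fin H, IndepFun (lam h) (X h') P := fun h h' =>
    hindep.comp ((measurable_pi_apply h).comp measurable_fst)
      ((measurable_pi_apply h').comp measurable_fst)
  have indep2 : ∀ h h' : Fin H, IndepFun (lam' h) (Y h') P := fun h h' =>
    hindep.comp ((measurable_pi_apply h).comp measurable_snd)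
      ((measurable_pi_apply h').comp measurable_snd)
  -- term-by-term mixed integrals factorize
  have keyTerm : ∀ h k : Fin H,
      (∫ ω, (lam h ω * X h ω) * (lam' k ω * Y k ω) ∂P)
        = (∫ ω, lam h ω * lam' k ω ∂P) * (∫ ω, X h ω * Y k ω ∂P) := by
    intro h k
    have h1 := (indepHK h k h k).integral_fun_mul_eq_mul_integral
      (mulInt (hlam h) (hlam' k)).aestronglyMeasurable
      (mulInt (hX h) (hY k)).aestronglyMeasurable
    rw [← h1]
    congr 1; funext ω; ring
  have meanLX : ∀ h, (∫ ω, lam h ω * X h ω ∂P) = lamBar * (∫ ω, X h ω ∂P) := by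
    intro h
    rw [(indep1 h h).integral_fun_mul_eq_mul_integral (hlam h).aestronglyMeasurable
      (hX h).aestronglyMeasurable, hmean h]
  have meanLY : ∀ k, (∫ ω, lam' k ω * Y k ω ∂P) = lamBar * (∫ ω, Y k ω ∂P) := by
    intro k
    rw [(indep2 k k).integral_fun_mul_eq_mul_integral (hlam' k).aestronglyMeasurable
      (hY k).aestronglyMeasurable, hmean' k]
  -- expand the integral of the product of sums
  have intTerm : ∀ p : Fin H × Fin H,
      Integrable (fun ω => (lam p.1 ω * X p.1 ω) * (lam' p.2 ω * Y p.2 ω)) P := by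
    intro p
    have h1 := (indepHK p.1 p.2 p.1 p.2).integrable_mul
      (mulInt (hlam p.1) (hlam' p.2)) (mulInt (hX p.1) (hY p.2))
    have heq : (fun ω => (lam p.1 ω * X p.1 ω) * (lam' p.2 ω * Y p.2 ω))
        = (fun ω => lam p.1 ω * lam' p.2 ω) * (fun ω => X p.1 ω * Y p.2 ω) := by
      funext ω; simp [mul_comm, mul_assoc, mul_left_comm]
    rw [heq]; exact h1
  have EST : (∫ ω, (∑ h, lam h ω * X h ω) * (∑ k, lam' k ω * Y k ω) ∂P)
      = ∑ p : Fin H × Fin H,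
          (∫ ω, lam p.1 ω * lam' p.2 ω ∂P) * (∫ ω, X p.1 ω * Y p.2 ω ∂P) := by
    have hrw : (fun ω => (∑ h, lam h ω * X h ω) * (∑ k, lam' k ω * Y k ω))
        = fun ω => ∑ p : Fin H × Fin H,
            (lam p.1 ω * X p.1 ω) * (lam' p.2 ω * Y p.2 ω) := by
      funext ω
      rw [Finset.sum_mul_sum, Fintype.sum_prod_type]
    rw [hrw, integral_finset_sum _ (fun p _ => intTerm p)]
    exact Finset.sum_congr rfl fun p _ => keyTerm p.1 p.2
  have ES : (∫ ω, (∑ h, lam h ω * X h ω) ∂P) = ∑ h, lamBar * (∫ ω, X h ω ∂P) := by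
    rw [integral_finset_sum _ (fun h _ => mulInt (hlam h) (hX h))]
    exact Finset.sum_congr rfl fun h _ => meanLX h
  have ET : (∫ ω, (∑ k, lam' k ω * Y k ω) ∂P) = ∑ k, lamBar * (∫ ω, Y k ω ∂P) := by
    rw [integral_finset_sum _ (fun k _ => mulInt (hlam' k) (hY k))]
    exact Finset.sum_congr rfl fun k _ => meanLY k
  -- cov of sums as a double sum
  have covSum : cov P (fun ω => ∑ h, lam h ω * X h ω) (fun ω => ∑ k, lam' k ω * Y k ω)
      = ∑ p : Fin H × Fin H,
          ((∫ ω, lam p.1 ω * lam' p.2 ω ∂P) * (∫ ω, X p.1 ω * Y p.2 ω ∂P)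
            - lamBar ^ 2 * (∫ ω, X p.1 ω ∂P) * (∫ ω, Y p.2 ω ∂P)) := by
    rw [cov, EST, ES, ET, Finset.sum_mul_sum, Fintype.sum_prod_type,
      Fintype.sum_prod_type, ← Finset.sum_sub_distrib]
    refine Finset.sum_congr rfl fun i _ => ?_
    rw [← Finset.sum_sub_distrib]
    exact Finset.sum_congr rfl fun j _ => by ring
  rw [covSum, ← Finset.sum_filter_add_sum_filter_not Finset.univ
    (fun p : Fin H × Fin H => p.1 = p.2)]
  -- identically distributed facts
  have hEXY : ∀ h, (∫ ω, X h ω * Y h ω ∂P) = (∫ ω, X x0 ω * Y x0 ω ∂P) :=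
    fun h => ((hid h).comp (measurable_fst.mul measurable_snd)).integral_eq
  have hEX : ∀ h, (∫ ω, X h ω ∂P) = (∫ ω, X x0 ω ∂P) :=
    fun h => ((hid h).comp measurable_fst).integral_eq
  have hEY : ∀ h, (∫ ω, Y h ω ∂P) = (∫ ω, Y x0 ω ∂P) :=
    fun h => ((hid h).comp measurable_snd).integral_eq
  have hρ' : ρ = κ - lamBar ^ 2 := by
    have := hρ x0
    rw [cov, hκ x0, hmean x0, hmean' x0] at this
    rw [← this]; ring
  -- diagonal part
  have hdiagset : Finset.univ.filter (fun p : Fin H × Fin H => p.1 = p.2)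
      = Finset.univ.image (fun h : Fin H => (h, h)) := by
    ext p
    simp only [Finset.mem_filter, Finset.mem_univ, true_and, Finset.mem_image]
    constructor
    · intro hp; obtain ⟨a, b⟩ := p; cases hp; exact ⟨a, rfl⟩
    · rintro ⟨a, rfl⟩; rfl
  have hinj : Function.Injective (fun h : Fin H => ((h, h) : Fin H × Fin H)) :=
    fun a b hab => congrArg Prod.fst hab
  have hdiag : ∑ p ∈ Finset.univ.filter (fun p : Fin H × Fin H => p.1 = p.2),
      ((∫ ω, lam p.1 ω * lam' p.2 ω ∂P) * (∫ ω, X p.1 ω * Y p.2 ω ∂P)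
        - lamBar ^ 2 * (∫ ω, X p.1 ω ∂P) * (∫ ω, Y p.2 ω ∂P))
      = cov P (X x0) (Y x0) * κ * H
        + (∫ ω, X x0 ω ∂P) * (∫ ω, Y x0 ω ∂P) * ρ * H := by
    rw [hdiagset, Finset.sum_image (fun a _ b _ hab => hinj hab)]
    have : ∀ h : Fin H,
        ((∫ ω, lam h ω * lam' h ω ∂P) * (∫ ω, X h ω * Y h ω ∂P)
          - lamBar ^ 2 * (∫ ω, X h ω ∂P) * (∫ ω, Y h ω ∂P))
        = cov P (X x0) (Y x0) * κ
          + (∫ ω, X x0 ω ∂P) * (∫ ω, Y x0 ω ∂P) * ρ := by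
      intro h
      rw [hκ h, hEXY h, hEX h, hEY h, cov, hρ']
      ring
    rw [Finset.sum_congr rfl (fun h _ => this h), Finset.sum_const, Finset.card_univ,
      Fintype.card_fin, nsmul_eq_mul]
    ring
  -- off-diagonal part
  have hoff : ∑ p ∈ Finset.univ.filter (fun p : Fin H × Fin H => ¬p.1 = p.2),
      ((∫ ω, lam p.1 ω * lam' p.2 ω ∂P) * (∫ ω, X p.1 ω * Y p.2 ω ∂P)
        - lamBar ^ 2 * (∫ ω, X p.1 ω ∂P) * (∫ ω, Y p.2 ω ∂P))
      = lamBar ^ 2 * ∑ p ∈ Finset.univ.filter (fun p : Fin H × Fin H => p.1 ≠ p.2),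
          cov P (X p.1) (Y p.2) := by
    rw [Finset.mul_sum]
    refine Finset.sum_congr rfl fun p hp => ?_
    have hne : p.1 ≠ p.2 := (Finset.mem_filter.mp hp).2
    rw [(hcross p.1 p.2 hne).integral_fun_mul_eq_mul_integral (hlam p.1).aestronglyMeasurable
      (hlam' p.2).aestronglyMeasurable, hmean p.1, hmean' p.2, cov]
    ring
  rw [hdiag, hoff]
end

section
/- Let (Ω, 𝓕, P) be a probability space and H ≥ 1. Let λ_1, …, λ_H, λ'_1, …, λ'_H and X_1, …, X_H, Y_1, …, Y_H be square-integrable real random variables such that the random vector (λ_1, …, λ_H, λ'_1, …, λ'_H) is independent of the random vector (X_1, …, X_H, Y_1, …, Y_H). Assume additionally that: (i) the pairs (X_h, Y_h) are identically distributed across h = 1, …, H; (ii) λ_h and λ'_k are independent whenever h ≠ k; (iii) E[λ_h λ'_h] = κ and Cov(λ_h, λ'_h) = ρ for all h; (iv) the pairs (X_1, Y_1), …, (X_H, Y_H) are mutually independent across h. Then Cov(Σ_{h=1}^H λ_h X_h, Σ_{k=1}^H λ'_k Y_k) = Cov(X_1, Y_1)·κ·H + E[X_1]·E[Y_1]·ρ·H.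 (This is the final assertion of Proposition 3 of the paper: when the latent measures μ*_h are independent, the cross-term Σ_{h≠k} Cov(X_h, Y_k) vanishes.) -/
open MeasureTheory ProbabilityTheory

private lemma memL2_integrable_mul {Ω : Type*} [MeasurableSpace Ω] {P : Measure Ω}
    {f g : Ω → ℝ} (hf : MemLp f 2 P) (hg : MemLp g 2 P) :
    Integrable (fun ω => f ω * g ω) P := by
  have h : MemLp (f • g) 1 P := hg.smul hf (p := 2) (q := 2) (r := 1)
  rw [memLp_one_iff_integrable] at h
  exact h

/-- Proposition 3, final assertion: when the pairs (X_h, Y_h) are moreover mutually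
independent across h, the cross term vanishes. -/
theorem covariance_sum_latent_factor_independent
    {Ω : Type*} [MeasurableSpace Ω] (P : Measure Ω) [IsProbabilityMeasure P]
    (H : ℕ) (hH : 1 ≤ H)
    (lam lam' X Y : Fin H → Ω → ℝ)
    (hlam : ∀ h, MemLp (lam h) 2 P) (hlam' : ∀ h, MemLp (lam' h) 2 P)
    (hX : ∀ h, MemLp (X h) 2 P) (hY : ∀ h, MemLp (Y h) 2 P)
    (hindep : IndepFun
      (fun ω => (((fun h => lam h ω), (fun h => lam' h ω)) : (Fin H → ℝ) × (Fin H → ℝ)))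
      (fun ω => (((fun h => X h ω), (fun h => Y h ω)) : (Fin H → ℝ) × (Fin H → ℝ))) P)
    -- (i) the pairs (X_h, Y_h) are identically distributed across h
    (hid : ∀ h, IdentDistrib (fun ω => (X h ω, Y h ω))
      (fun ω => (X ⟨0, hH⟩ ω, Y ⟨0, hH⟩ ω)) P P)
    -- (ii) λ_h and λ'_k are independent whenever h ≠ k
    (hcross : ∀ h k, h ≠ k → IndepFun (lam h) (lam' k) P)
    -- (iii) common mixed moment and covariance of matching scores
    (κ ρ : ℝ)
    (hκ : ∀ h, (∫ ω, lam h ω * lam' h ω ∂P) = κ)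
    (hρ : ∀ h, cov P (lam h) (lam' h) = ρ)
    -- (iv) the pairs (X_1, Y_1), ..., (X_H, Y_H) are mutually independent across h
    (hXYindep : iIndepFun
      (fun h => fun ω => (X h ω, Y h ω)) P) :
    cov P (fun ω => ∑ h, lam h ω * X h ω) (fun ω => ∑ k, lam' k ω * Y k ω) =
      cov P (X ⟨0, hH⟩) (Y ⟨0, hH⟩) * κ * H
        + (∫ ω, X ⟨0, hH⟩ ω ∂P) * (∫ ω, Y ⟨0, hH⟩ ω ∂P) * ρ * H := by
  classical
  -- integrabilities
  have hXi : ∀ h, Integrable (X h) P := fun h => (hX h).integrable one_le_two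
  have hYi : ∀ h, Integrable (Y h) P := fun h => (hY h).integrable one_le_two
  have hlami : ∀ h, Integrable (lam h) P := fun h => (hlam h).integrable one_le_two
  have hlami' : ∀ h, Integrable (lam' h) P := fun h => (hlam' h).integrable one_le_two
  have hll : ∀ h k, Integrable (fun ω => lam h ω * lam' k ω) P :=
    fun h k => memL2_integrable_mul (hlam h) (hlam' k)
  have hxy : ∀ h k, Integrable (fun ω => X h ω * Y k ω) P :=
    fun h k => memL2_integrable_mul (hX h) (hY k)
  -- component independences extracted from the vector independence
  have hprod : ∀ h k, IndepFun (fun ω => lam h ω * lam' k ω) (fun ω => X h ω * Y k ω) P := by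
    intro h k
    exact hindep.comp
      (show Measurable fun p : (Fin H → ℝ) × (Fin H → ℝ) => p.1 h * p.2 k from
        ((measurable_pi_apply h).comp measurable_fst).mul
          ((measurable_pi_apply k).comp measurable_snd))
      (show Measurable fun p : (Fin H → ℝ) × (Fin H → ℝ) => p.1 h * p.2 k from
        ((measurable_pi_apply h).comp measurable_fst).mul
          ((measurable_pi_apply k).comp measurable_snd))
  have hlX : ∀ h, IndepFun (lam h) (X h) P := by
    intro h
    exact hindep.comp
      (show Measurable fun p : (Fin H → ℝ) × (Fin H → ℝ) => p.1 h from
        (measurable_pi_apply h).comp measurable_fst)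
      (show Measurable fun p : (Fin H → ℝ) × (Fin H → ℝ) => p.1 h from
        (measurable_pi_apply h).comp measurable_fst)
  have hlY : ∀ k, IndepFun (lam' k) (Y k) P := by
    intro k
    exact hindep.comp
      (show Measurable fun p : (Fin H → ℝ) × (Fin H → ℝ) => p.2 k from
        (measurable_pi_apply k).comp measurable_snd)
      (show Measurable fun p : (Fin H → ℝ) × (Fin H → ℝ) => p.2 k from
        (measurable_pi_apply k).comp measurable_snd)
  -- the four-fold products are integrable
  have h4i : ∀ h k, Integrable (fun ω => (lam h ω * X h ω) * (lam' k ω * Y k ω)) P := by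
    intro h k
    have := (hprod h k).integrable_mul (hll h k) (hxy h k)
    have heq : ((fun ω => lam h ω * lam' k ω) * fun ω => X h ω * Y k ω)
        = fun ω => (lam h ω * X h ω) * (lam' k ω * Y k ω) := by
      funext ω; simp [Pi.mul_apply]; ring
    rwa [heq] at this
  -- factorization of the four-fold products
  have h4f : ∀ h k, (∫ ω, (lam h ω * X h ω) * (lam' k ω * Y k ω) ∂P)
      = (∫ ω, lam h ω * lam' k ω ∂P) * (∫ ω, X h ω * Y k ω ∂P) := by
    intro h k
    have := (hprod h k).integral_mul_eq_mul_integral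
      ((hlam h).aestronglyMeasurable.mul (hlam' k).aestronglyMeasurable)
      ((hX h).aestronglyMeasurable.mul (hY k).aestronglyMeasurable)
    have heq : ((fun ω => lam h ω * lam' k ω) * fun ω => X h ω * Y k ω)
        = fun ω => (lam h ω * X h ω) * (lam' k ω * Y k ω) := by
      funext ω; simp [Pi.mul_apply]; ring
    rwa [heq] at this
  -- factorization of the single products
  have hlXf : ∀ h, (∫ ω, lam h ω * X h ω ∂P) = (∫ ω, lam h ω ∂P) * (∫ ω, X h ω ∂P) := by
    intro h
    have := (hlX h).integral_mul_eq_mul_integral (hlami h).aestronglyMeasurable (hXi h).aestronglyMeasurable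
    simpa [Pi.mul_apply] using this
  have hlYf : ∀ k, (∫ ω, lam' k ω * Y k ω ∂P) = (∫ ω, lam' k ω ∂P) * (∫ ω, Y k ω ∂P) := by
    intro k
    have := (hlY k).integral_mul_eq_mul_integral (hlami' k).aestronglyMeasurable (hYi k).aestronglyMeasurable
    simpa [Pi.mul_apply] using this
  -- expand the covariance of the sums
  have hlXint : ∀ h, Integrable (fun ω => lam h ω * X h ω) P :=
    fun h => memL2_integrable_mul (hlam h) (hX h)
  have hlYint : ∀ k, Integrable (fun ω => lam' k ω * Y k ω) P :=
    fun k => memL2_integrable_mul (hlam' k) (hY k)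
  have hint1 : (∫ ω, (∑ h, lam h ω * X h ω) ∂P) = ∑ h, ∫ ω, lam h ω * X h ω ∂P :=
    integral_finset_sum _ (fun h _ => hlXint h)
  have hint2 : (∫ ω, (∑ k, lam' k ω * Y k ω) ∂P) = ∑ k, ∫ ω, lam' k ω * Y k ω ∂P :=
    integral_finset_sum _ (fun k _ => hlYint k)
  have hint3 : (∫ ω, (∑ h, lam h ω * X h ω) * (∑ k, lam' k ω * Y k ω) ∂P)
      = ∑ h, ∑ k, ∫ ω, (lam h ω * X h ω) * (lam' k ω * Y k ω) ∂P := by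
    have : ∀ ω, (∑ h, lam h ω * X h ω) * (∑ k, lam' k ω * Y k ω)
        = ∑ h, ∑ k, (lam h ω * X h ω) * (lam' k ω * Y k ω) := by
      intro ω; rw [Finset.sum_mul_sum]
    simp_rw [this]
    rw [integral_finset_sum _ (fun h _ => integrable_finset_sum _ (fun k _ => h4i h k))]
    exact Finset.sum_congr rfl fun h _ => integral_finset_sum _ (fun k _ => h4i h k)
  -- the generic (h,k) covariance term
  set c : ℝ := cov P (X ⟨0, hH⟩) (Y ⟨0, hH⟩) * κ
      + (∫ ω, X ⟨0, hH⟩ ω ∂P) * (∫ ω, Y ⟨0, hH⟩ ω ∂P) * ρ with hc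
  have hterm : ∀ h k, (∫ ω, (lam h ω * X h ω) * (lam' k ω * Y k ω) ∂P)
      - (∫ ω, lam h ω * X h ω ∂P) * (∫ ω, lam' k ω * Y k ω ∂P)
      = if h = k then c else 0 := by
    intro h k
    rw [h4f h k, hlXf h, hlYf k]
    by_cases hhk : h = k
    · subst hhk
      rw [if_pos rfl]
      -- identically distributed facts
      have hXY1 : (∫ ω, X h ω * Y h ω ∂P) = ∫ ω, X ⟨0, hH⟩ ω * Y ⟨0, hH⟩ ω ∂P :=
        ((hid h).comp (measurable_fst.mul measurable_snd)).integral_eq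
      have hX1 : (∫ ω, X h ω ∂P) = ∫ ω, X ⟨0, hH⟩ ω ∂P :=
        ((hid h).comp measurable_fst).integral_eq
      have hY1 : (∫ ω, Y h ω ∂P) = ∫ ω, Y ⟨0, hH⟩ ω ∂P :=
        ((hid h).comp measurable_snd).integral_eq
      have hll' : (∫ ω, lam h ω ∂P) * (∫ ω, lam' h ω ∂P) = κ - ρ := by
        have := hρ h
        rw [cov, hκ h] at this
        linarith
      rw [hκ h, hXY1, hX1, hY1, hc, cov]
      linear_combination (-((∫ ω, X ⟨0, hH⟩ ω ∂P) * (∫ ω, Y ⟨0, hH⟩ ω ∂P))) * hll'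
    · simp only [if_neg hhk]
      have h1 : (∫ ω, lam h ω * lam' k ω ∂P) = (∫ ω, lam h ω ∂P) * (∫ ω, lam' k ω ∂P) := by
        have := (hcross h k hhk).integral_mul_eq_mul_integral (hlami h).aestronglyMeasurable (hlami' k).aestronglyMeasurable
        simpa [Pi.mul_apply] using this
      have h2 : (∫ ω, X h ω * Y k ω ∂P) = (∫ ω, X h ω ∂P) * (∫ ω, Y k ω ∂P) := by
        have hXYk : IndepFun (X h) (Y k) P :=
          ((hXYindep.indepFun hhk).comp measurable_fst measurable_snd :)
        have := hXYk.integral_mul_eq_mul_integral (hXi h).aestronglyMeasurable (hYi k).aestronglyMeasurable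
        simpa [Pi.mul_apply] using this
      rw [h1, h2]; ring
  -- put everything together
  rw [cov, hint1, hint2, hint3, Finset.sum_mul_sum, ← Finset.sum_sub_distrib]
  have : ∀ h ∈ Finset.univ, (∑ k, ∫ ω, (lam h ω * X h ω) * (lam' k ω * Y k ω) ∂P)
      - (∑ k, (∫ ω, lam h ω * X h ω ∂P) * (∫ ω, lam' k ω * Y k ω ∂P)) = c := by
    intro h _
    rw [← Finset.sum_sub_distrib]
    have : (∑ k, ((∫ ω, (lam h ω * X h ω) * (lam' k ω * Y k ω) ∂P)
        - (∫ ω, lam h ω * X h ω ∂P) * (∫ ω, lam' k ω * Y k ω ∂P)))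
        = ∑ k : Fin H, if h = k then c else 0 := by
      exact Finset.sum_congr rfl fun k _ => hterm h k
    rw [this, Finset.sum_ite_eq, if_pos (Finset.mem_univ h)]
  rw [Finset.sum_congr rfl this, Finset.sum_const, Finset.card_univ, Fintype.card_fin,
    nsmul_eq_mul, hc]
  ring
end
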